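/- For every baseline function b, every time t, and every state s, the behavior policy μ* satisfies Σ_{a : μ*_t(a|s)>0} μ*_t(a|s)·(π_t(a|s)/μ*_t(a|s))²·u_{π,t}(s,a) = ( Σ_a π_t(a|s)·√(u_{π,t}(s,a)) )²; i.e., under μ*, the importance-weighted second moment of √u collapses to the square of the π-expectation of √u. -/
import Mathlib


open Finset

namespace DOpt

variable {S A : Type}

/-- A time-indexed policy: for each time step and state, a probability distribution on actions. -/
def IsPolicy [Fintype A] (μ : ℕ → S → A → ℝ) : Prop :=
  ∀ t s, (∀ a, 0 ≤ μ t s a) ∧ ∑ a, μ t s a = 1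

/-- A transition probability kernel on the finite state space. -/
def IsKernel [Fintype S] (p : S → A → S → ℝ) : Prop :=
  ∀ s a, (∀ s', 0 ≤ p s a s') ∧ ∑ s', p s a s' = 1

/-- Action value `q_{π,t}(s,a)` computed with `n` remaining transitions after time `t`
(`n = T - 1 - t` in a horizon-`T` MDP). -/
noncomputable def qval [Fintype S] [Fintype A] (p : S → A → S → ℝ) (π : ℕ → S → A → ℝ)
    (r : S → A → ℝ) : ℕ → ℕ → S → A → ℝ
  | 0, _, s, a => r s a
  | n + 1, t, s, a =>
      r s a + ∑ s', p s a s' * ∑ a', π (t + 1) s' a' * qval p π r n (t + 1) s' a'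

/-- `q_{π,t}(s,a)` in the horizon-`T` MDP. -/
noncomputable def qf [Fintype S] [Fintype A] (T : ℕ) (p : S → A → S → ℝ)
    (π : ℕ → S → A → ℝ) (r : S → A → ℝ) (t : ℕ) (s : S) (a : A) : ℝ :=
  qval p π r (T - 1 - t) t s a

/-- `v_{π,t}(s) = Σ_a π_t(a|s) q_{π,t}(s,a)`. -/
noncomputable def vf [Fintype S] [Fintype A] (T : ℕ) (p : S → A → S → ℝ)
    (π : ℕ → S → A → ℝ) (r : S → A → ℝ) (t : ℕ) (s : S) : ℝ :=
  ∑ a, π t s a * qf T p π r t s a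

/-- `ν_{π,t}(s,a) = Var_{s' ∼ p(·|s,a)}(v_{π,t+1}(s'))` for `t ≤ T-2`, and `0` at `t = T-1`. -/
noncomputable def nuf [Fintype S] [Fintype A] (T : ℕ) (p : S → A → S → ℝ)
    (π : ℕ → S → A → ℝ) (r : S → A → ℝ) (t : ℕ) (s : S) (a : A) : ℝ :=
  if t + 2 ≤ T then
    (∑ s', p s a s' * (vf T p π r (t + 1) s') ^ 2) -
      (∑ s', p s a s' * vf T p π r (t + 1) s') ^ 2
  else 0

/-- Trajectories with `n` further transitions after the first action:
`(a_t, s_{t+1}, a_{t+1}, …, s_{t+n}, a_{t+n})`. -/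
def Traj (S A : Type) : ℕ → Type
  | 0 => A
  | n + 1 => A × S × Traj S A n

/-- Expectation, over trajectories generated by the behavior policy `μ` starting at time `t`
in state `s` with `n` further transitions, of a function `f` of the trajectory. -/
noncomputable def Exp [Fintype S] [Fintype A] (p : S → A → S → ℝ) (μ : ℕ → S → A → ℝ) :
    (n : ℕ) → ℕ → S → (Traj S A n → ℝ) → ℝ
  | 0, t, s, f => ∑ a, μ t s a * f a
  | n + 1, t, s, f =>
      ∑ a, μ t s a * ∑ s', p s a s' * Exp p μ n (t + 1) s' (fun τ => f (a, s', τ))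

/-- Conditional variance of a function of the trajectory, given `S_t = s`. -/
noncomputable def Var [Fintype S] [Fintype A] (p : S → A → S → ℝ) (μ : ℕ → S → A → ℝ)
    (n : ℕ) (t : ℕ) (s : S) (f : Traj S A n → ℝ) : ℝ :=
  Exp p μ n t s (fun τ => (f τ) ^ 2) - (Exp p μ n t s f) ^ 2

/-- `b̄_t(s) = Σ_a π_t(a|s) b_t(s,a)`. -/
noncomputable def bbar [Fintype A] (π : ℕ → S → A → ℝ) (b : ℕ → S → A → ℝ)
    (t : ℕ) (s : S) : ℝ :=
  ∑ a, π t s a * b t s a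

/-- The per-decision importance-sampling estimator `G^b` with baseline `b`, target policy `π`
and behavior policy `μ`, as a function of the trajectory from time `t` (with `n` further
transitions, `n = T - 1 - t`). -/
noncomputable def Gest [Fintype S] [Fintype A] (π μ : ℕ → S → A → ℝ) (r : S → A → ℝ)
    (b : ℕ → S → A → ℝ) : (n : ℕ) → ℕ → S → Traj S A n → ℝ
  | 0, t, s, a => (π t s a / μ t s a) * (r s a - b t s a) + bbar π b t s
  | n + 1, t, s, (a, s', τ) =>
      (π t s a / μ t s a) * (r s a + Gest π μ r b n (t + 1) s' τ - b t s a) + bbar π b t s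

/-- Normalization of a weight vector into a probability distribution; the uniform distribution
when the total weight vanishes. -/
noncomputable def normPol [Fintype A] (w : A → ℝ) (a : A) : ℝ :=
  if (∑ a', w a') = 0 then ((Fintype.card A : ℝ))⁻¹ else w a / ∑ a', w a'

/-- `u_{π,t}(s,a)` (with baseline `b`), defined backwards in time together with the optimal
behavior policy `μ*`; the first argument is the number `n = T - 1 - t` of remaining
transitions after time `t`. -/
noncomputable def uAux [Fintype S] [Fintype A] (T : ℕ) (p : S → A → S → ℝ)
    (π : ℕ → S → A → ℝ) (r : S → A → ℝ) (b : ℕ → S → A → ℝ) :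
    ℕ → ℕ → S → A → ℝ
  | 0, t, s, a => (qf T p π r t s a - b t s a) ^ 2
  | n + 1, t, s, a =>
      (qf T p π r t s a - b t s a) ^ 2 + nuf T p π r t s a +
        ∑ s', p s a s' *
          Var p
            (fun t' s₁ a₁ => normPol (fun a₂ =>
              π t' s₁ a₂ * Real.sqrt (uAux T p π r b (n - (t' - (t + 1))) t' s₁ a₂)) a₁)
            n (t + 1) s'
            (Gest π
              (fun t' s₁ a₁ => normPol (fun a₂ =>
                π t' s₁ a₂ * Real.sqrt (uAux T p π r b (n - (t' - (t + 1))) t' s₁ a₂)) a₁)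
              r b n (t + 1) s')
  termination_by n => n
  decreasing_by all_goals omega

/-- `u_{π,t}(s,a)` in the horizon-`T` MDP, with baseline `b`. -/
noncomputable def uf [Fintype S] [Fintype A] (T : ℕ) (p : S → A → S → ℝ)
    (π : ℕ → S → A → ℝ) (r : S → A → ℝ) (b : ℕ → S → A → ℝ) (t : ℕ) (s : S) (a : A) : ℝ :=
  uAux T p π r b (T - 1 - t) t s a

/-- The optimal behavior policy `μ*_t(a|s) ∝ π_t(a|s) √(u_{π,t}(s,a))` tailored to the
baseline `b` (uniform when all the weights vanish). -/
noncomputable def mustar [Fintype S] [Fintype A] (T : ℕ) (p : S → A → S → ℝ)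
    (π : ℕ → S → A → ℝ) (r : S → A → ℝ) (b : ℕ → S → A → ℝ) (t : ℕ) (s : S) (a : A) : ℝ :=
  normPol (fun a' => π t s a' * Real.sqrt (uf T p π r b t s a')) a

/-- Conditional expectation `E[G^b(τ^μ_{t:T-1}) | S_t = s]`. -/
noncomputable def ExpG [Fintype S] [Fintype A] (T : ℕ) (p : S → A → S → ℝ)
    (π μ : ℕ → S → A → ℝ) (r : S → A → ℝ) (b : ℕ → S → A → ℝ) (t : ℕ) (s : S) : ℝ :=
  Exp p μ (T - 1 - t) t s (Gest π μ r b (T - 1 - t) t s)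

/-- Conditional variance `Var(G^b(τ^μ_{t:T-1}) | S_t = s)`. -/
noncomputable def VarG [Fintype S] [Fintype A] (T : ℕ) (p : S → A → S → ℝ)
    (π μ : ℕ → S → A → ℝ) (r : S → A → ℝ) (b : ℕ → S → A → ℝ) (t : ℕ) (s : S) : ℝ :=
  Var p μ (T - 1 - t) t s (Gest π μ r b (T - 1 - t) t s)

/-- Membership in the enlarged policy-search space
`Λ = {μ : ∀ t,s,a, μ_t(a|s) = 0 → π_t(a|s)·u_{π,t}(s,a) = 0}`. -/
def inLambda [Fintype S] [Fintype A] (T : ℕ) (p : S → A → S → ℝ)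
    (π : ℕ → S → A → ℝ) (r : S → A → ℝ) (b : ℕ → S → A → ℝ) (μ : ℕ → S → A → ℝ) : Prop :=
  ∀ t s a, t < T → μ t s a = 0 → π t s a * uf T p π r b t s a = 0


/-- The optimal baseline `b*_t(s,a) = q_{π,t}(s,a)`. -/
noncomputable def bstar [Fintype S] [Fintype A] (T : ℕ) (p : S → A → S → ℝ)
    (π : ℕ → S → A → ℝ) (r : S → A → ℝ) : ℕ → S → A → ℝ :=
  fun t s a => qf T p π r t s a

/-- The zero baseline: with it, `Gest` is the plain PDIS estimator `G^{PDIS}`. -/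
def zerob : ℕ → S → A → ℝ := fun _ _ _ => 0

/-- Jensen's inequality for the square on a finite probability vector. -/
lemma jensen_sq {ι : Type} [Fintype ι] (w x : ι → ℝ) (hw : ∀ i, 0 ≤ w i)
    (hs : ∑ i, w i = 1) : (∑ i, w i * x i) ^ 2 ≤ ∑ i, w i * x i ^ 2 := by
  have h := Finset.sum_mul_sq_le_sq_mul_sq Finset.univ
    (fun i => Real.sqrt (w i)) (fun i => Real.sqrt (w i) * x i)
  have e1 : ∀ i, Real.sqrt (w i) * (Real.sqrt (w i) * x i) = w i * x i := fun i => by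
    rw [← mul_assoc, Real.mul_self_sqrt (hw i)]
  have e2 : ∀ i, Real.sqrt (w i) ^ 2 = w i := fun i => Real.sq_sqrt (hw i)
  have e3 : ∀ i, (Real.sqrt (w i) * x i) ^ 2 = w i * x i ^ 2 := fun i => by
    rw [mul_pow, e2]
  simp only [e1, e2, e3, hs, one_mul] at h
  exact h

lemma exp_sq_le [Fintype S] [Fintype A] (p : S → A → S → ℝ) (μ : ℕ → S → A → ℝ)
    (hp : IsKernel p) (hμ : IsPolicy μ) :
    ∀ (n t : ℕ) (s : S) (f : Traj S A n → ℝ),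
      (Exp p μ n t s f) ^ 2 ≤ Exp p μ n t s (fun τ => f τ ^ 2)
  | 0, t, s, f => by
      simpa [Exp] using jensen_sq (μ t s) f (hμ t s).1 (hμ t s).2
  | n + 1, t, s, f => by
      simp only [Exp]
      have h1 : (∑ a, μ t s a * ∑ s', p s a s' *
            Exp p μ n (t+1) s' (fun τ => f (a, s', τ))) ^ 2
          ≤ ∑ a, μ t s a * (∑ s', p s a s' *
            Exp p μ n (t+1) s' (fun τ => f (a, s', τ))) ^ 2 :=
        jensen_sq (μ t s) _ (hμ t s).1 (hμ t s).2
      refine h1.trans (Finset.sum_le_sum fun a _ =>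
        mul_le_mul_of_nonneg_left ?_ ((hμ t s).1 a))
      have h2 : (∑ s', p s a s' * Exp p μ n (t+1) s' (fun τ => f (a, s', τ))) ^ 2
          ≤ ∑ s', p s a s' * (Exp p μ n (t+1) s' (fun τ => f (a, s', τ))) ^ 2 :=
        jensen_sq (p s a) _ (hp s a).1 (hp s a).2
      refine h2.trans (Finset.sum_le_sum fun s' _ =>
        mul_le_mul_of_nonneg_left ?_ ((hp s a).1 s'))
      exact exp_sq_le p μ hp hμ n (t+1) s' _

lemma var_nonneg' [Fintype S] [Fintype A] (p : S → A → S → ℝ) (μ : ℕ → S → A → ℝ)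
    (hp : IsKernel p) (hμ : IsPolicy μ) (n t : ℕ) (s : S) (f : Traj S A n → ℝ) :
    0 ≤ Var p μ n t s f :=
  sub_nonneg.mpr (exp_sq_le p μ hp hμ n t s f)

lemma normPol_nonneg [Fintype A] (w : A → ℝ) (hw : ∀ a, 0 ≤ w a) (a : A) :
    0 ≤ normPol w a := by
  unfold normPol
  split
  · positivity
  · exact div_nonneg (hw a) (Finset.sum_nonneg fun i _ => hw i)

lemma normPol_sum_one [Fintype A] [Nonempty A] (w : A → ℝ) :
    ∑ a, normPol w a = 1 := by
  unfold normPol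
  by_cases h : (∑ a', w a') = 0
  · simp only [h, if_true, eq_self_iff_true]
    rw [Finset.sum_const, Finset.card_univ, nsmul_eq_mul]
    rw [mul_inv_cancel₀]
    exact_mod_cast Fintype.card_ne_zero
  · simp only [h, if_false, eq_self_iff_true]
    rw [← Finset.sum_div, div_self h]

lemma nuf_nonneg [Fintype S] [Fintype A] (T : ℕ) (p : S → A → S → ℝ)
    (π : ℕ → S → A → ℝ) (r : S → A → ℝ) (hp : IsKernel p) (t : ℕ) (s : S) (a : A) :
    0 ≤ nuf T p π r t s a := by
  unfold nuf
  split
  · have := jensen_sq (p s a) (vf T p π r (t + 1)) (hp s a).1 (hp s a).2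
    linarith
  · exact le_refl 0

lemma uAux_nonneg [Fintype S] [Fintype A] [Nonempty A] (T : ℕ) (p : S → A → S → ℝ)
    (π : ℕ → S → A → ℝ) (r : S → A → ℝ) (b : ℕ → S → A → ℝ)
    (hp : IsKernel p) (hπ : IsPolicy π) :
    ∀ (n t : ℕ) (s : S) (a : A), 0 ≤ uAux T p π r b n t s a
  | 0, t, s, a => by rw [uAux]; positivity
  | n + 1, t, s, a => by
      rw [uAux]
      have hpol : IsPolicy (fun t' s₁ a₁ => normPol (fun a₂ =>
          π t' s₁ a₂ * Real.sqrt (uAux T p π r b (n - (t' - (t + 1))) t' s₁ a₂)) a₁) := by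
        intro t' s₁
        constructor
        · intro a₁
          exact normPol_nonneg _ (fun a₂ =>
            mul_nonneg ((hπ t' s₁).1 a₂) (Real.sqrt_nonneg _)) a₁
        · exact normPol_sum_one _
      have h1 : 0 ≤ (qf T p π r t s a - b t s a) ^ 2 + nuf T p π r t s a :=
        add_nonneg (sq_nonneg _) (nuf_nonneg T p π r hp t s a)
      refine add_nonneg h1 (Finset.sum_nonneg fun s' _ => mul_nonneg ((hp s a).1 s') ?_)
      exact var_nonneg' p _ hp hpol n (t + 1) s' _

lemma uf_nonneg [Fintype S] [Fintype A] [Nonempty A] (T : ℕ) (p : S → A → S → ℝ)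
    (π : ℕ → S → A → ℝ) (r : S → A → ℝ) (b : ℕ → S → A → ℝ)
    (hp : IsKernel p) (hπ : IsPolicy π) (t : ℕ) (s : S) (a : A) :
    0 ≤ uf T p π r b t s a :=
  uAux_nonneg T p π r b hp hπ _ t s a

lemma key_second_moment {A : Type} [Fintype A] [Nonempty A] (pi u : A → ℝ)
    (hpi : ∀ a, 0 ≤ pi a) (hu : ∀ a, 0 ≤ u a) :
    (∑ a ∈ Finset.univ.filter
        (fun a => 0 < normPol (fun a' => pi a' * Real.sqrt (u a')) a),
        normPol (fun a' => pi a' * Real.sqrt (u a')) a *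
          (pi a / normPol (fun a' => pi a' * Real.sqrt (u a')) a) ^ 2 * u a) =
      (∑ a, pi a * Real.sqrt (u a)) ^ 2 := by
  classical
  set w : A → ℝ := fun a => pi a * Real.sqrt (u a) with hwdef
  have hw0 : ∀ a, 0 ≤ w a := fun a => mul_nonneg (hpi a) (Real.sqrt_nonneg _)
  by_cases hW : (∑ a', w a') = 0
  · have hwa : ∀ a, w a = 0 := fun a =>
      (Finset.sum_eq_zero_iff_of_nonneg (fun i _ => hw0 i)).mp hW a (Finset.mem_univ a)
    have hzero : ∀ a, pi a ^ 2 * u a = 0 := by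
      intro a
      rcases mul_eq_zero.mp (hwa a) with h | h
      · rw [h]; ring
      · have hle : u a ≤ 0 := Real.sqrt_eq_zero'.mp h
        have : u a = 0 := le_antisymm hle (hu a)
        rw [this, mul_zero]
    have hRHS : (∑ a, pi a * Real.sqrt (u a)) = ∑ a', w a' := rfl
    rw [hRHS, hW, show (0:ℝ)^2 = 0 by norm_num]
    refine Finset.sum_eq_zero fun a _ => ?_
    have hm : normPol w a ≠ 0 := by
      unfold normPol
      rw [if_pos hW]
      have : (0:ℝ) < (Fintype.card A : ℝ) := by
        exact_mod_cast Fintype.card_pos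
      positivity
    have hrw : normPol w a * (pi a / normPol w a) ^ 2 * u a
        = pi a ^ 2 * u a * (normPol w a / normPol w a ^ 2) := by ring
    rw [hrw, hzero a, zero_mul]
  · have hWpos : 0 < ∑ a', w a' :=
      lt_of_le_of_ne (Finset.sum_nonneg fun i _ => hw0 i) (Ne.symm hW)
    have hmu : ∀ a, normPol w a = w a / ∑ a', w a' := by
      intro a; unfold normPol; rw [if_neg hW]
    have hfilter : ∀ a, (0 < normPol w a) ↔ 0 < w a := by
      intro a
      rw [hmu a, div_pos_iff]
      constructor
      · rintro (⟨h, _⟩ | ⟨_, h⟩)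
        · exact h
        · exact absurd h (not_lt.mpr (le_of_lt hWpos))
      · exact fun h => Or.inl ⟨h, hWpos⟩
    have hterm : ∀ a, 0 < w a →
        normPol w a * (pi a / normPol w a) ^ 2 * u a = (∑ a', w a') * w a := by
      intro a hwa
      have hpia : 0 < pi a := by
        rcases (hpi a).lt_or_eq with h | h
        · exact h
        · exfalso; rw [hwdef] at hwa; simp only [← h, zero_mul] at hwa; exact lt_irrefl 0 hwa
      have hsq : 0 < Real.sqrt (u a) := by
        by_contra h
        push_neg at h
        have : Real.sqrt (u a) = 0 := le_antisymm h (Real.sqrt_nonneg _)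
        rw [hwdef] at hwa
        simp only [this, mul_zero] at hwa
        exact lt_irrefl 0 hwa
      have hua : u a = Real.sqrt (u a) * Real.sqrt (u a) := (Real.mul_self_sqrt (hu a)).symm
      rw [hmu a]
      have hwne : w a ≠ 0 := ne_of_gt hwa
      field_simp
      rw [hua, hwdef]
      ring
    calc (∑ a ∈ Finset.univ.filter (fun a => 0 < normPol w a),
            normPol w a * (pi a / normPol w a) ^ 2 * u a)
        = ∑ a ∈ Finset.univ.filter (fun a => 0 < normPol w a), (∑ a', w a') * w a := by
          refine Finset.sum_congr rfl fun a ha => ?_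
          exact hterm a ((hfilter a).mp (Finset.mem_filter.mp ha).2)
      _ = ∑ a ∈ Finset.univ.filter (fun a => 0 < w a), (∑ a', w a') * w a := by
          refine Finset.sum_congr ?_ fun a _ => rfl
          refine Finset.filter_congr fun a _ => ?_
          simp [hfilter a]
      _ = (∑ a', w a') * ∑ a ∈ Finset.univ.filter (fun a => 0 < w a), w a := by
          rw [Finset.mul_sum]
      _ = (∑ a', w a') * ∑ a', w a' := by
          congr 1
          refine Finset.sum_filter_of_ne fun a _ h => ?_
          exact lt_of_le_of_ne (hw0 a) (Ne.symm h)
      _ = (∑ a, pi a * Real.sqrt (u a)) ^ 2 := by rw [sq]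

/-- for every baseline `b`, every time `t` and state `s`, under the optimal
behavior policy `μ*` the importance-weighted second moment of `√(u_{π,t})` collapses to the
square of the `π`-expectation of `√(u_{π,t})`. -/
theorem mustar_second_moment {S A : Type} [Fintype S] [Fintype A] [Nonempty A]
    (T : ℕ) (hT : 1 ≤ T)
    (p : S → A → S → ℝ) (hp : IsKernel p)
    (r : S → A → ℝ)
    (π : ℕ → S → A → ℝ) (hπ : IsPolicy π)
    (b : ℕ → S → A → ℝ)
    (t : ℕ) (ht : t < T) (s : S) :
    (∑ a ∈ Finset.univ.filter (fun a => 0 < mustar T p π r b t s a),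
        mustar T p π r b t s a *
          (π t s a / mustar T p π r b t s a) ^ 2 * uf T p π r b t s a) =
      (∑ a, π t s a * Real.sqrt (uf T p π r b t s a)) ^ 2 := by
  exact key_second_moment (π t s) (fun a => uf T p π r b t s a)
    ((hπ t s).1) (fun a => uf_nonneg T p π r b hp hπ t s a)

end DOpt
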